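/- arXiv:1908.06685 — 4 statements merged into one kernel-verified Lean document; each statement's English description precedes it below -/
import Mathlib

section
/- Let V = (ZMod 2)^3, let F be the space of functions V → ZMod 2, and let U ⊆ F be the subspace spanned by all linear functionals on V together with the indicator function 1_{0} of the origin and the constant function 1_V. Then for every g, h ∈ V, the function 1_{g} + 1_{h} + 1_{g+h} lies in U, where 1_{g} denotes the indicator function of the singleton {g}. -/
abbrev V : Type := Fin 3 → ZMod 2
abbrev F : Type := V → ZMod 2

/-- Indicator function of a subset `S ⊆ V`, with values in `ZMod 2`. -/
noncomputable def ind (S : Set V) : F := S.indicator 1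

/-- The subspace of `F` spanned by the linear functionals on `V` together with the
indicator of the origin and the constant function `1`. -/
noncomputable def U : Submodule (ZMod 2) F :=
  Submodule.span (ZMod 2)
    ({f : F | IsLinearMap (ZMod 2) f} ∪ {ind {0}, ind Set.univ})

/-- The linear functional `v ↦ a ⬝ v`. -/
def lf (a : V) : F := fun v => a 0 * v 0 + a 1 * v 1 + a 2 * v 2

/-- Cross product in `(ZMod 2)^3`. -/
def cross (g h : V) : V :=
  ![g 1 * h 2 + g 2 * h 1, g 0 * h 2 + g 2 * h 0, g 0 * h 1 + g 1 * h 0]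

lemma ind_single (g x : V) : ind {g} x = if x = g then 1 else 0 := by
  rw [ind, Set.indicator_apply]
  simp [Set.mem_singleton_iff]

lemma ind_univ (x : V) : ind Set.univ x = 1 := by
  simp [ind]

lemma lf_mem (a : V) : lf a ∈ U := by
  apply Submodule.subset_span
  left
  constructor
  · intro x y
    simp only [lf, Pi.add_apply]
    ring
  · intro c x
    simp only [lf, Pi.smul_apply, smul_eq_mul]
    ring

lemma ind_zero_mem : ind {0} ∈ U := by
  apply Submodule.subset_span
  right
  exact Set.mem_insert _ _

lemma ind_univ_mem : ind Set.univ ∈ U := by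
  apply Submodule.subset_span
  right
  exact Set.mem_insert_of_mem _ rfl

lemma key : ∀ g h v : V,
    ((if v = g then (1 : ZMod 2) else 0) + (if v = h then 1 else 0) +
      (if v = g + h then 1 else 0)) =
    (if cross g h = 0 then (if v = 0 then 1 else 0)
      else lf (cross g h) v + (if v = 0 then 1 else 0) + 1) := by
  decide

theorem stmt1 (g h : V) : ind {g} + ind {h} + ind {g + h} ∈ U := by
  by_cases hc : cross g h = 0
  · have e : ind {g} + ind {h} + ind {g + h} = ind {0} := by
      funext v
      simp only [Pi.add_apply, ind_single]
      rw [key g h v, if_pos hc]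
    rw [e]
    exact ind_zero_mem
  · have e : ind {g} + ind {h} + ind {g + h}
        = lf (cross g h) + ind {0} + ind Set.univ := by
      funext v
      simp only [Pi.add_apply, ind_single, ind_univ]
      rw [key g h v, if_neg hc]
    rw [e]
    exact add_mem (add_mem (lf_mem _) ind_zero_mem) ind_univ_mem
end

section
/- Let V = (ZMod 2)^3, F the space of functions V → ZMod 2, and U the subspace spanned by the linear functionals together with 1_{0} and 1_V. Then the map V → F/U sending g to the class of the indicator function 1_{g} is a linear isomorphism. In particular, every coset of U in F contains the indicator function 1_{g} of exactly one element g ∈ V. -/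
set_option maxRecDepth 100000

/- ### Auxiliary definitions -/

/-- Computable indicator of a point. -/
def δ (g : V) : F := fun x => if x = g then 1 else 0

/-- Coordinate functionals. -/
def p (i : Fin 3) : F := fun x => x i

/-- The key map `F → V` whose kernel is `U`. -/
def φ0 (f : F) : V := fun i => ∑ x : V, x i * f x

def idx (x : V) : Fin 8 :=
  ⟨(x 0).val + 2 * (x 1).val + 4 * (x 2).val, by
    have h0 := ZMod.val_lt (x 0); have h1 := ZMod.val_lt (x 1); have h2 := ZMod.val_lt (x 2)
    omega⟩

def dec (j : Fin 8) : V := fun i => ((j.val / 2 ^ i.val : ℕ) : ZMod 2)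

lemma dec_idx : ∀ x : V, dec (idx x) = x := by decide

def dd (f : F) : ZMod 2 := f ![1,0,0] + f ![0,1,0] + f ![1,1,0]

lemma key' : ∀ w : Fin 8 → ZMod 2, (fun f : F => φ0 f = 0 →
    f = (f ![1,0,0] + dd f) • p 0 + (f ![0,1,0] + dd f) • p 1 + (f ![0,0,1] + dd f) • p 2
        + dd f • ((fun _ => 1) : F) + (f ![0,0,0] + dd f) • δ 0) (fun x => w (idx x)) := by
  decide

lemma key_s2 : ∀ f : F, φ0 f = 0 →
    f = (f ![1,0,0] + dd f) • p 0 + (f ![0,1,0] + dd f) • p 1 + (f ![0,0,1] + dd f) • p 2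
        + dd f • ((fun _ => 1) : F) + (f ![0,0,0] + dd f) • δ 0 := by
  intro f
  have := key' (fun j => f (dec j))
  simpa only [dec_idx] using this

lemma ind_singleton (g : V) : ind {g} = δ g := by
  funext x
  by_cases h : x = g <;> simp [ind, δ, h]

lemma ind_univ_s2 : ind Set.univ = fun _ => (1 : ZMod 2) := by
  funext x; simp [ind]

/-- Bundled version of `φ0`. -/
def φ : F →ₗ[ZMod 2] V where
  toFun := φ0
  map_add' f g := by
    funext i
    simp [φ0, mul_add, Finset.sum_add_distrib]
  map_smul' c f := by
    funext i
    simp [φ0, Finset.mul_sum, mul_left_comm]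

lemma hφδ : ∀ g : V, φ (δ g) = g := by decide

lemma sum_pts : ∀ i : Fin 3, (∑ x : V, x i • x) = 0 := by decide

lemma hUker : U ≤ LinearMap.ker φ := by
  rw [U, Submodule.span_le]
  rintro f (hf | hf)
  · -- linear functional
    rw [SetLike.mem_coe, LinearMap.mem_ker]
    funext i
    have lf := hf.mk' f
    have : φ f i = ∑ x : V, (hf.mk' f) (x i • x) := by
      show (∑ x : V, x i * f x) = _
      refine Finset.sum_congr rfl fun x _ => ?_
      rw [map_smul, IsLinearMap.mk'_apply, smul_eq_mul]
    rw [this, ← map_sum, sum_pts, map_zero]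
    rfl
  · rcases hf with rfl | rfl
    · rw [SetLike.mem_coe, LinearMap.mem_ker, ind_singleton]
      show φ0 (δ 0) = 0
      decide
    · rw [SetLike.mem_coe, LinearMap.mem_ker, ind_univ_s2]
      show φ0 (fun _ => 1) = 0
      decide

lemma p_mem (i : Fin 3) : p i ∈ U := by
  apply Submodule.subset_span
  left
  exact ⟨fun x y => rfl, fun c x => rfl⟩

lemma one_mem' : ((fun _ => 1) : F) ∈ U := by
  rw [← ind_univ_s2]
  exact Submodule.subset_span (Or.inr (by simp))

lemma δ0_mem : δ (0 : V) ∈ U := by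
  rw [← ind_singleton]
  exact Submodule.subset_span (Or.inr (by simp))

lemma ker_le : ∀ f : F, φ f = 0 → f ∈ U := by
  intro f hf
  rw [key_s2 f hf]
  refine Submodule.add_mem _ (Submodule.add_mem _ (Submodule.add_mem _ (Submodule.add_mem _
    ?_ ?_) ?_) ?_) ?_ <;>
    exact Submodule.smul_mem _ _ (by first | exact p_mem _ | exact one_mem' | exact δ0_mem)

lemma mk_eq {a b : F} (h : φ a = φ b) :
    (Submodule.Quotient.mk a : F ⧸ U) = Submodule.Quotient.mk b := by
  rw [Submodule.Quotient.eq]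
  exact ker_le _ (by rw [map_sub, h, sub_self])

/-- The linear map `V → F ⧸ U`. -/
noncomputable def ψ : V →ₗ[ZMod 2] F ⧸ U where
  toFun g := Submodule.Quotient.mk (δ g)
  map_add' g h := by
    rw [← Submodule.Quotient.mk_add]
    exact mk_eq (by rw [map_add, hφδ, hφδ, hφδ])
  map_smul' c g := by
    rcases (show c = 0 ∨ c = 1 by revert c; decide) with rfl | rfl
    · simp only [zero_smul, RingHom.id_apply]
      exact (Submodule.Quotient.mk_eq_zero U).2 δ0_mem
    · simp

lemma ψ_bij : Function.Bijective ψ := by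
  constructor
  · intro a b hab
    have h := (Submodule.Quotient.eq U).1 hab
    have := hUker h
    rw [LinearMap.mem_ker, map_sub, hφδ, hφδ, sub_eq_zero] at this
    exact this
  · intro x
    obtain ⟨f, rfl⟩ := Submodule.Quotient.mk_surjective U x
    refine ⟨φ f, ?_⟩
    show Submodule.Quotient.mk (δ (φ f)) = Submodule.Quotient.mk f
    exact mk_eq (by rw [hφδ])

theorem stmt2 :
    (∃ e : V ≃ₗ[ZMod 2] (F ⧸ U), ∀ g : V,
        e g = Submodule.Quotient.mk (ind {g})) ∧
      ∀ x : F ⧸ U, ∃! g : V, Submodule.Quotient.mk (ind {g}) = x := by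
  have he : ∀ g : V, (LinearEquiv.ofBijective ψ ψ_bij) g = Submodule.Quotient.mk (ind {g}) := by
    intro g; rw [ind_singleton]; rfl
  refine ⟨⟨LinearEquiv.ofBijective ψ ψ_bij, he⟩, ?_⟩
  intro x
  obtain ⟨g, hg⟩ := ψ_bij.2 x
  refine ⟨g, by show Submodule.Quotient.mk (ind {g}) = x; rw [ind_singleton]; exact hg, ?_⟩
  intro y hy
  apply ψ_bij.1
  show Submodule.Quotient.mk (δ y) = Submodule.Quotient.mk (δ g)
  rw [← ind_singleton, ← ind_singleton, hy, ind_singleton]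
  exact hg.symm
end

section
/- Consider the following twelve permutations of {1,...,7}, each a product of two disjoint transpositions: (23)(47), (47)(56), (27)(34), (16)(27), (24)(37), (15)(37), (45)(67), (12)(67), (46)(57), (13)(57), (17)(26), (17)(35). The subgroup of Sym({1,...,7}) generated by these twelve permutations acts transitively on {1,...,7}. -/
open Equiv

/-- The twelve monodromy permutations, as permutations of `{0,…,7}`
(only the labels `1,…,7` are moved). -/
def gens : Set (Equiv.Perm (Fin 8)) :=
  { Equiv.swap 2 3 * Equiv.swap 4 7,
    Equiv.swap 4 7 * Equiv.swap 5 6,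
    Equiv.swap 2 7 * Equiv.swap 3 4,
    Equiv.swap 1 6 * Equiv.swap 2 7,
    Equiv.swap 2 4 * Equiv.swap 3 7,
    Equiv.swap 1 5 * Equiv.swap 3 7,
    Equiv.swap 4 5 * Equiv.swap 6 7,
    Equiv.swap 1 2 * Equiv.swap 6 7,
    Equiv.swap 4 6 * Equiv.swap 5 7,
    Equiv.swap 1 3 * Equiv.swap 5 7,
    Equiv.swap 1 7 * Equiv.swap 2 6,
    Equiv.swap 1 7 * Equiv.swap 3 5 }

lemma mem47 : Equiv.swap 4 7 * Equiv.swap 5 6 ∈ Subgroup.closure gens :=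
  Subgroup.subset_closure (by simp [gens])

lemma mem15 : Equiv.swap 1 5 * Equiv.swap 3 7 ∈ Subgroup.closure gens :=
  Subgroup.subset_closure (by simp [gens])

lemma mem16 : Equiv.swap 1 6 * Equiv.swap 2 7 ∈ Subgroup.closure gens :=
  Subgroup.subset_closure (by simp [gens])

lemma mem12 : Equiv.swap 1 2 * Equiv.swap 6 7 ∈ Subgroup.closure gens :=
  Subgroup.subset_closure (by simp [gens])

lemma mem13 : Equiv.swap 1 3 * Equiv.swap 5 7 ∈ Subgroup.closure gens :=
  Subgroup.subset_closure (by simp [gens])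

lemma mem17 : Equiv.swap 1 7 * Equiv.swap 2 6 ∈ Subgroup.closure gens :=
  Subgroup.subset_closure (by simp [gens])

lemma reach (y : Fin 8) (hy : y ≠ 0) :
    ∃ g ∈ Subgroup.closure gens, g 1 = y := by
  fin_cases y
  · exact absurd rfl hy
  · exact ⟨1, one_mem _, by decide⟩
  · exact ⟨_, mem12, by decide⟩
  · exact ⟨_, mem13, by decide⟩
  · exact ⟨_, mul_mem mem47 mem17, by decide⟩
  · exact ⟨_, mem15, by decide⟩
  · exact ⟨_, mem16, by decide⟩
  · exact ⟨_, mem17, by decide⟩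

/-- The group generated by the twelve monodromy permutations acts transitively
on `{1,…,7}`. -/
theorem stmt13 :
    ∀ x y : Fin 8, x ≠ 0 → y ≠ 0 →
      ∃ g ∈ Subgroup.closure gens, g x = y := by
  intro x y hx hy
  obtain ⟨gx, hgx, hx1⟩ := reach x hx
  obtain ⟨gy, hgy, hy1⟩ := reach y hy
  refine ⟨gy * gx⁻¹, mul_mem hgy (inv_mem hgx), ?_⟩
  simp [Equiv.Perm.mul_apply, ← hx1, hy1]
end

section
/- Let V = (ZMod 2)^3 and let α_{ij}, α_{jk}, α_{ik} ∈ V satisfy α_{ij} + α_{jk} + α_{ik} = 0. Define ξ ∈ V* as follows: if α_{ij}, α_{jk}, α_{ik} are pairwise distinct, let ξ be the unique nonzero linear functional vanishing on W = span{α_{ij}, α_{jk}, α_{ik}}; otherwise set ξ = 0. Then, in the space of functions V → ZMod 2 modulo the subspace spanned by 1_{0} and the constant function 1_V, the class of the function 1_{α_{ij}} + 1_{α_{jk}} + 1_{α_{ik}} equals the class of ξ (viewing the linear functional ξ as a function V → ZMod 2). -/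
/-- The subspace of `F` spanned by the indicator of the origin and the
constant function `1`. -/
noncomputable def C : Submodule (ZMod 2) F :=
  Submodule.span (ZMod 2) {ind {0}, ind Set.univ}

set_option synthInstance.maxSize 512 in
set_option maxHeartbeats 1000000 in
lemma span_all : ∀ (a b x v : V), a ≠ 0 → b ≠ 0 → a ≠ b →
    x ≠ 0 → x ≠ a → x ≠ b → x ≠ a + b →
    v = 0 ∨ v = a ∨ v = b ∨ v = x ∨ v = a+b ∨ v = a+x ∨ v = b+x ∨ v = a+b+x := by
  decide

lemma zmod2_eq_zero {z : ZMod 2} (h : z ≠ 1) : z = 0 := by revert h; revert z; decide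

lemma vadd_self (v : V) : v + v = 0 := by
  funext i; exact CharTwo.add_self_eq_zero _

theorem stmt19 (a b c : V) (habc : a + b + c = 0) :
    (a ≠ b → b ≠ c → a ≠ c →
      ∀ ξ : Module.Dual (ZMod 2) V, ξ ≠ 0 →
        (∀ w ∈ Submodule.span (ZMod 2) {a, b, c}, ξ w = 0) →
        (Submodule.Quotient.mk (ind {a} + ind {b} + ind {c}) : F ⧸ C) =
          Submodule.Quotient.mk (⇑ξ : F)) ∧
    (¬(a ≠ b ∧ b ≠ c ∧ a ≠ c) →
      (Submodule.Quotient.mk (ind {a} + ind {b} + ind {c}) : F ⧸ C) = 0) := by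
  have add_cancel : ∀ u w : V, u + w = 0 → u = w := by
    intro u w h
    have := congrArg (· + w) h
    simpa [add_assoc, vadd_self] using this
  constructor
  · intro hab hbc hac ξ hξ hker
    have ha0 : a ≠ 0 := by
      rintro rfl
      exact hbc (add_cancel b c (by simpa using habc))
    have hb0 : b ≠ 0 := by
      rintro rfl
      exact hac (add_cancel a c (by simpa using habc))
    have hcab : c = a + b := (add_cancel (a + b) c habc).symm
    have hka : ξ a = 0 := hker a (Submodule.subset_span (by simp))
    have hkb : ξ b = 0 := hker b (Submodule.subset_span (by simp))
    have hkab : ξ (a + b) = 0 := by rw [map_add, hka, hkb, add_zero]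
    have hab' : a + b ≠ 0 := fun h => hab (add_cancel a b h)
    have key : ∀ x : V, x ≠ 0 → x ≠ a → x ≠ b → x ≠ a + b → ξ x = 1 := by
      intro x h0 h1 h2 h3
      by_contra hne
      have hx0 : ξ x = 0 := zmod2_eq_zero hne
      refine hξ (LinearMap.ext fun v => ?_)
      rcases span_all a b x v ha0 hb0 hab h0 h1 h2 h3 with
        rfl | rfl | rfl | rfl | rfl | rfl | rfl | rfl <;>
        simp [map_add, hka, hkb, hx0]
    rw [Submodule.Quotient.eq]
    have heq : (ind {a} + ind {b} + ind {c}) - ⇑ξ = ind {0} + ind Set.univ := by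
      funext v
      have e : ∀ s : V, ind {s} v = if v = s then 1 else 0 := fun s => by
        simp [ind, Set.indicator_apply]
      have h5 : ind Set.univ v = 1 := by simp [ind]
      simp only [Pi.add_apply, Pi.sub_apply, e, h5]
      by_cases hv0 : v = 0
      · rw [if_neg (by rw [hv0]; exact Ne.symm ha0),
          if_neg (by rw [hv0]; exact Ne.symm hb0),
          if_neg (by rw [hv0, hcab]; exact Ne.symm hab'),
          if_pos hv0, hv0, map_zero]
        decide
      by_cases hva : v = a
      · have hca : c ≠ a := by
          rw [hcab]; intro h
          apply hb0
          have := congrArg (a + ·) h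
          simpa [← add_assoc, vadd_self] using this
        rw [if_pos hva, if_neg (by rw [hva]; exact hab),
          if_neg (by rw [hva]; exact Ne.symm hca),
          if_neg hv0, hva, hka]
        decide
      by_cases hvb : v = b
      · have hcb : c ≠ b := by
          rw [hcab]; intro h
          apply ha0
          have := congrArg (· + b) h
          simpa [add_assoc, vadd_self] using this
        rw [if_neg hva, if_pos hvb,
          if_neg (by rw [hvb]; exact Ne.symm hcb),
          if_neg hv0, hvb, hkb]
        decide
      by_cases hvc : v = c
      · rw [if_neg hva, if_neg hvb, if_pos hvc, if_neg hv0, hvc, hcab, hkab]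
        decide
      · rw [if_neg hva, if_neg hvb, if_neg hvc, if_neg hv0,
          key v hv0 hva hvb (fun h => hvc (h.trans hcab.symm))]
        decide
    rw [heq]
    exact add_mem (Submodule.subset_span (by simp)) (Submodule.subset_span (by simp))
  · intro h
    rw [Submodule.Quotient.mk_eq_zero]
    by_cases hab : a = b
    · have hc : c = 0 := by
        have h2 : a + a + c = 0 := by rw [hab] at habc ⊢; exact habc
        rwa [vadd_self, zero_add] at h2
      have heq2 : ind {a} + ind {b} + ind {c} = ind {(0:V)} := by
        funext v
        simp only [Pi.add_apply, ← hab, hc]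
        rw [CharTwo.add_self_eq_zero, zero_add]
      rw [heq2]
      exact Submodule.subset_span (by simp)
    by_cases hbc : b = c
    · have hA : a = 0 := by
        have h2 : a + (c + c) = 0 := by rw [add_assoc, hbc] at habc; exact habc
        rwa [vadd_self, add_zero] at h2
      have heq2 : ind {a} + ind {b} + ind {c} = ind {(0:V)} := by
        funext v
        simp only [Pi.add_apply, ← hbc, hA]
        rw [add_assoc, CharTwo.add_self_eq_zero, add_zero]
      rw [heq2]
      exact Submodule.subset_span (by simp)
    by_cases hac : a = c
    · have hB : b = 0 := by
        have h2 : a + b + a = 0 := by rw [← hac] at habc; exact habc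
        rwa [add_comm (a + b) a, ← add_assoc, vadd_self, zero_add] at h2
      have heq2 : ind {a} + ind {b} + ind {c} = ind {(0:V)} := by
        funext v
        simp only [Pi.add_apply, ← hac, hB]
        rw [add_comm (ind {a} v), add_assoc, CharTwo.add_self_eq_zero, add_zero]
      rw [heq2]
      exact Submodule.subset_span (by simp)
    · exact absurd ⟨hab, hbc, hac⟩ h
end
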